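/- Individual node convergence: if v ∈ N_i (the i-th neighborhood hierarchy level), then for all n ≥ i, ĥ_v^{(n)} = c(v). In particular, the Local-core algorithm converges within a number of iterations bounded by the number of neighborhood hierarchy levels. -/
import Mathlib


open Finset

variable {α : Type*} [DecidableEq α]

-- Neighbors of `v` within the strongly induced subhypergraph `H[S]`.
open Classical in
noncomputable def nbr (E : Finset (Finset α)) (S : Finset α) (v : α) : Finset α :=
  S.filter (fun u => u ≠ v ∧ ∃ e ∈ E, e ⊆ S ∧ v ∈ e ∧ u ∈ e)

/-- `S` is `k`-cohesive: every node of `S` has at least `k` neighbors in `H[S]`. -/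
def cohesive (E : Finset (Finset α)) (k : ℕ) (S : Finset α) : Prop :=
  ∀ v ∈ S, k ≤ (nbr E S v).card

/-- Neighborhood-based core-number: the largest `k` such that `v` lies in some
`k`-cohesive set (equivalently in the nbr-`k`-core, the greatest such set). -/
noncomputable def coreNum (E : Finset (Finset α)) (v : α) : ℕ :=
  sSup {k | ∃ S : Finset α, cohesive E k S ∧ v ∈ S}

/-- Hirsch `H`-operator: the maximum `y` such that at least `y` of the elements
of the multiset are each at least `y`. -/
noncomputable def hirsch (m : Multiset ℕ) : ℕ :=
  sSup {y : ℕ | y ≤ (m.filter (fun x => y ≤ x)).card}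

/- `N⁺(v)` for threshold `k` w.r.t. the value assignment `f`: the nodes (other
than `v`) covered by hyperedges containing `v` all of whose nodes `u` satisfy
`f u ≥ k`.
-/
open Classical in
noncomputable def plusNbr (E : Finset (Finset α)) (f : α → ℕ) (v : α) (k : ℕ) : Finset α :=
  ((E.filter (fun e => v ∈ e ∧ ∀ u ∈ e, k ≤ f u)).biUnion id).erase v

/-- Local coreness constraint `LCCSAT(k)` for node `v` w.r.t. values `f`. -/
def lccsat (E : Finset (Finset α)) (f : α → ℕ) (v : α) (k : ℕ) : Prop :=
  k ≤ (plusNbr E f v k).card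

variable [Fintype α]

/-- The coupled Local-core recurrences `(h⁽ⁿ⁾, ĥ⁽ⁿ⁾)`. -/
noncomputable def localSeq (E : Finset (Finset α)) : ℕ → (α → ℕ) × (α → ℕ)
  | 0 => (fun v => (nbr E Finset.univ v).card, fun v => (nbr E Finset.univ v).card)
  | n + 1 =>
    let hh : α → ℕ := fun v =>
      min (hirsch ((nbr E Finset.univ v).val.map (localSeq E n).2)) ((localSeq E n).2 v)
    (hh, fun v => sSup {k | k ≤ hh v ∧ lccsat E hh v k})

/-- `h_v^{(n)}`. -/
noncomputable def hSeq (E : Finset (Finset α)) (n : ℕ) (v : α) : ℕ := (localSeq E n).1 v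

/-- `ĥ_v^{(n)}`, the corrected hypergraph h-index of order `n`. -/
noncomputable def hhatSeq (E : Finset (Finset α)) (n : ℕ) (v : α) : ℕ := (localSeq E n).2 v

variable [Fintype α]

/-- Nodes remaining after peeling `n` neighborhood-hierarchy levels. -/
noncomputable def remaining (E : Finset (Finset α)) : ℕ → Finset α
  | 0 => Finset.univ
  | n + 1 =>
    (remaining E n).filter (fun v =>
      ¬ ∀ u ∈ remaining E n, (nbr E (remaining E n) v).card ≤ (nbr E (remaining E n) u).card)

/-- `N_i`: the `i`-th neighborhood hierarchy level (nodes of minimum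
neighborhood size in the remaining strongly induced subhypergraph). -/
noncomputable def level (E : Finset (Finset α)) (i : ℕ) : Finset α :=
  remaining E i \ remaining E (i + 1)

/-! ### Auxiliary lemmas -/

lemma nbr_mono (E : Finset (Finset α)) {S T : Finset α} (hST : S ⊆ T) (v : α) :
    nbr E S v ⊆ nbr E T v := by
  intro u hu
  simp only [nbr, Finset.mem_filter] at hu ⊢
  obtain ⟨huS, hne, e, heE, heS, hve, hue⟩ := hu
  exact ⟨hST huS, hne, e, heE, heS.trans hST, hve, hue⟩

lemma remaining_zero (E : Finset (Finset α)) : remaining E 0 = (Finset.univ : Finset α) := rfl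

lemma remaining_succ_subset (E : Finset (Finset α)) (n : ℕ) :
    remaining E (n + 1) ⊆ remaining E n := by
  show Finset.filter _ _ ⊆ _
  exact Finset.filter_subset _ _

lemma remaining_antitone (E : Finset (Finset α)) {i j : ℕ} (hij : i ≤ j) :
    remaining E j ⊆ remaining E i := by
  induction j with
  | zero => simp_all
  | succ j ih =>
    rcases Nat.lt_or_ge i (j + 1) with h | h
    · exact (remaining_succ_subset E j).trans (ih (Nat.lt_succ_iff.mp h))
    · have : i = j + 1 := le_antisymm hij h
      subst this; exact subset_rfl

lemma coreNum_bdd (E : Finset (Finset α)) (v : α) :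
    BddAbove {k | ∃ S : Finset α, cohesive E k S ∧ v ∈ S} := by
  refine ⟨Fintype.card α, ?_⟩
  rintro k ⟨S, hS, hv⟩
  exact (hS v hv).trans (Finset.card_le_univ _)

lemma coreNum_nonempty (E : Finset (Finset α)) (v : α) :
    ({k | ∃ S : Finset α, cohesive E k S ∧ v ∈ S}).Nonempty :=
  ⟨0, {v}, fun _ _ => Nat.zero_le _, Finset.mem_singleton_self v⟩

lemma le_coreNum {E : Finset (Finset α)} {k : ℕ} {S : Finset α} {v : α}
    (hS : cohesive E k S) (hv : v ∈ S) : k ≤ coreNum E v :=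
  le_csSup (coreNum_bdd E v) ⟨S, hS, hv⟩

lemma coreNum_spec (E : Finset (Finset α)) (v : α) :
    ∃ S : Finset α, cohesive E (coreNum E v) S ∧ v ∈ S :=
  Nat.sSup_mem (coreNum_nonempty E v) (coreNum_bdd E v)

lemma level_min {E : Finset (Finset α)} {i : ℕ} {v : α} (hv : v ∈ level E i) :
    v ∈ remaining E i ∧ ∀ u ∈ remaining E i,
      (nbr E (remaining E i) v).card ≤ (nbr E (remaining E i) u).card := by
  rw [level, Finset.mem_sdiff] at hv
  obtain ⟨h1, h2⟩ := hv
  refine ⟨h1, ?_⟩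
  by_contra hcon
  apply h2
  show v ∈ Finset.filter _ _
  rw [Finset.mem_filter]
  exact ⟨h1, hcon⟩

lemma exists_level_of_not_remaining {E : Finset (Finset α)} {i : ℕ} {u : α}
    (hu : u ∉ remaining E i) : ∃ j < i, u ∈ level E j := by
  induction i with
  | zero => exact absurd (Finset.mem_univ u) hu
  | succ i ih =>
    by_cases h : u ∈ remaining E i
    · exact ⟨i, Nat.lt_succ_self i, Finset.mem_sdiff.mpr ⟨h, hu⟩⟩
    · obtain ⟨j, hj, hl⟩ := ih h
      exact ⟨j, hj.trans (Nat.lt_succ_self i), hl⟩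

lemma coreNum_level_le {E : Finset (Finset α)} {j : ℕ} {u v : α}
    (hu : u ∈ level E j) (hv : v ∈ remaining E j) : coreNum E u ≤ coreNum E v := by
  apply csSup_le (coreNum_nonempty E u)
  rintro k ⟨S, hS, huS⟩
  by_contra hcon
  push_neg at hcon
  have hsub : ∀ t, t ≤ j + 1 → S ⊆ remaining E t := by
    intro t
    induction t with
    | zero => intro _ x _; exact Finset.mem_univ x
    | succ t ih =>
      intro ht x hx
      have htj : t ≤ j := Nat.lt_succ_iff.mp ht
      have hSt : S ⊆ remaining E t := ih (htj.trans (Nat.le_succ j))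
      have hvt : v ∈ remaining E t := remaining_antitone E htj hv
      obtain ⟨w, hw, hwmin⟩ :=
        Finset.exists_min_image (remaining E t)
          (fun u => (nbr E (remaining E t) u).card) ⟨v, hvt⟩
      have h1 : (nbr E (remaining E t) w).card ≤ coreNum E v :=
        le_coreNum (fun x hx => hwmin x hx) hvt
      have h2 : k ≤ (nbr E (remaining E t) x).card :=
        (hS x hx).trans (Finset.card_le_card (nbr_mono E hSt x))
      show x ∈ Finset.filter _ _
      rw [Finset.mem_filter]
      refine ⟨hSt hx, ?_⟩
      push_neg
      exact ⟨w, hw, lt_of_le_of_lt h1 (lt_of_lt_of_le hcon h2)⟩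
  have := hsub (j + 1) le_rfl huS
  rw [level, Finset.mem_sdiff] at hu
  exact hu.2 this

lemma hirsch_bdd (m : Multiset ℕ) :
    BddAbove {y : ℕ | y ≤ (m.filter (fun x => y ≤ x)).card} :=
  ⟨Multiset.card m, fun y hy => hy.trans (Multiset.card_le_card (Multiset.filter_le _ _))⟩

lemma le_hirsch {m : Multiset ℕ} {k : ℕ}
    (h : k ≤ (m.filter (fun x => k ≤ x)).card) : k ≤ hirsch m :=
  le_csSup (hirsch_bdd m) h

lemma hSeq_succ (E : Finset (Finset α)) (n : ℕ) (v : α) :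
    hSeq E (n + 1) v =
      min (hirsch ((nbr E Finset.univ v).val.map (hhatSeq E n))) (hhatSeq E n v) := rfl

lemma hhatSeq_succ (E : Finset (Finset α)) (n : ℕ) (v : α) :
    hhatSeq E (n + 1) v =
      sSup {k | k ≤ hSeq E (n + 1) v ∧ lccsat E (hSeq E (n + 1)) v k} := rfl

lemma hhatSet_nonempty (E : Finset (Finset α)) (n : ℕ) (v : α) :
    ({k | k ≤ hSeq E (n + 1) v ∧ lccsat E (hSeq E (n + 1)) v k}).Nonempty :=
  ⟨0, Nat.zero_le _, Nat.zero_le _⟩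

lemma hhatSet_bdd (E : Finset (Finset α)) (n : ℕ) (v : α) :
    BddAbove {k | k ≤ hSeq E (n + 1) v ∧ lccsat E (hSeq E (n + 1)) v k} :=
  ⟨hSeq E (n + 1) v, fun _ hk => hk.1⟩

lemma hhat_spec (E : Finset (Finset α)) (n : ℕ) (v : α) :
    hhatSeq E (n + 1) v ≤ hSeq E (n + 1) v ∧
      lccsat E (hSeq E (n + 1)) v (hhatSeq E (n + 1) v) := by
  rw [hhatSeq_succ]
  exact Nat.sSup_mem (hhatSet_nonempty E n v) (hhatSet_bdd E n v)

lemma hhat_succ_le (E : Finset (Finset α)) (n : ℕ) (v : α) :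
    hhatSeq E (n + 1) v ≤ hhatSeq E n v :=
  (hhat_spec E n v).1.trans (by rw [hSeq_succ]; exact min_le_right _ _)

lemma hhat_antitone (E : Finset (Finset α)) {i n : ℕ} (h : i ≤ n) (v : α) :
    hhatSeq E n v ≤ hhatSeq E i v := by
  induction n with
  | zero => simp_all
  | succ n ih =>
    rcases Nat.lt_or_ge i (n + 1) with h' | h'
    · exact (hhat_succ_le E n v).trans (ih (Nat.lt_succ_iff.mp h'))
    · have : i = n + 1 := le_antisymm h h'
      subst this; exact le_rfl

lemma hhat_zero (E : Finset (Finset α)) (v : α) :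
    hhatSeq E 0 v = (nbr E Finset.univ v).card := rfl

/-- Lower bound: the corrected h-index never drops below the core number. -/
lemma coreNum_le_hhat (E : Finset (Finset α)) :
    ∀ n, ∀ v : α, coreNum E v ≤ hhatSeq E n v := by
  intro n
  induction n with
  | zero =>
    intro v
    obtain ⟨S, hS, hv⟩ := coreNum_spec E v
    rw [hhat_zero]
    exact (hS v hv).trans (Finset.card_le_card (nbr_mono E (Finset.subset_univ S) v))
  | succ n ih =>
    have hstep : ∀ v : α, coreNum E v ≤ hSeq E (n + 1) v := by
      intro v
      obtain ⟨S, hS, hv⟩ := coreNum_spec E v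
      rw [hSeq_succ]
      refine le_min ?_ ((le_coreNum hS hv).trans (ih v))
      apply le_hirsch
      have hsubset : nbr E S v ⊆
          (nbr E Finset.univ v).filter (fun u => coreNum E v ≤ hhatSeq E n u) := by
        intro u hu
        rw [Finset.mem_filter]
        refine ⟨nbr_mono E (Finset.subset_univ S) v hu, ?_⟩
        have huS : u ∈ S := Finset.mem_of_mem_filter u hu
        exact (le_coreNum hS huS).trans (ih u)
      rw [Multiset.filter_map, Multiset.card_map]
      calc coreNum E v ≤ (nbr E S v).card := hS v hv
        _ ≤ ((nbr E Finset.univ v).filter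
              (fun u => coreNum E v ≤ hhatSeq E n u)).card := Finset.card_le_card hsubset
        _ = Multiset.card (Multiset.filter
              ((fun x => coreNum E v ≤ x) ∘ hhatSeq E n) (nbr E Finset.univ v).val) := by
          rfl
    intro v
    obtain ⟨S, hS, hv⟩ := coreNum_spec E v
    rw [hhatSeq_succ]
    apply le_csSup (hhatSet_bdd E n v)
    refine ⟨hstep v, ?_⟩
    show coreNum E v ≤ (plusNbr E (hSeq E (n + 1)) v (coreNum E v)).card
    have hsubset : nbr E S v ⊆ plusNbr E (hSeq E (n + 1)) v (coreNum E v) := by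
      intro u hu
      simp only [nbr, Finset.mem_filter] at hu
      obtain ⟨huS, hne, e, heE, heS, hve, hue⟩ := hu
      rw [plusNbr, Finset.mem_erase]
      refine ⟨hne, Finset.mem_biUnion.mpr ⟨e, ?_, hue⟩⟩
      simp only [Finset.mem_filter]
      refine ⟨heE, hve, fun w hw => ?_⟩
      have hwS : w ∈ S := heS hw
      have hc : coreNum E v ≤ coreNum E w := le_coreNum hS hwS
      exact hc.trans (hstep w)
    exact (hS v hv).trans (Finset.card_le_card hsubset)

/-- Upper bound at the peeling step. -/
lemma hhat_le_coreNum_of_level (E : Finset (Finset α)) :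
    ∀ i, ∀ v : α, v ∈ level E i → hhatSeq E i v ≤ coreNum E v := by
  intro i
  induction i using Nat.strong_induction_on with
  | _ i IH =>
    intro v hv
    obtain ⟨hvR, hmin⟩ := level_min hv
    have hdeg : (nbr E (remaining E i) v).card ≤ coreNum E v :=
      le_coreNum (fun u hu => hmin u hu) hvR
    match i, IH, hvR, hmin, hdeg with
    | 0, _, hvR, hmin, hdeg =>
      rw [hhat_zero]
      exact hdeg
    | j + 1, IH, hvR, hmin, hdeg =>
      by_contra hcon
      push_neg at hcon
      obtain ⟨hk_le, hlcc⟩ := hhat_spec E j v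
      set k := hhatSeq E (j + 1) v with hk
      have hsub : plusNbr E (hSeq E (j + 1)) v k ⊆ nbr E (remaining E (j + 1)) v := by
        intro u hu
        rw [plusNbr, Finset.mem_erase] at hu
        obtain ⟨hne, hu2⟩ := hu
        rw [Finset.mem_biUnion] at hu2
        obtain ⟨e, he, hue⟩ := hu2
        simp only [Finset.mem_filter] at he
        obtain ⟨heE, hve, hall⟩ := he
        have hR : ∀ w ∈ e, w ∈ remaining E (j + 1) := by
          intro w hw
          by_contra hwR
          obtain ⟨t, htj, hwl⟩ := exists_level_of_not_remaining hwR
          have h1 : hhatSeq E t w ≤ coreNum E w := IH t htj w hwl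
          have h2 : coreNum E w ≤ coreNum E v :=
            coreNum_level_le hwl (remaining_antitone E (le_of_lt htj) hvR)
          have h3 : k ≤ hSeq E (j + 1) w := hall w hw
          have h4 : hSeq E (j + 1) w ≤ hhatSeq E j w := by
            rw [hSeq_succ]; exact min_le_right _ _
          have h5 : hhatSeq E j w ≤ hhatSeq E t w :=
            hhat_antitone E (Nat.le_of_lt_succ htj) w
          omega
        refine nbr_mono E (le_refl _) v ?_
        simp only [nbr, Finset.mem_filter]
        exact ⟨hR u hue, hne, e, heE, fun w hw => hR w hw, hve, hue⟩
      have hcard : k ≤ (nbr E (remaining E (j + 1)) v).card :=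
        hlcc.trans (Finset.card_le_card hsub)
      omega

/-- Individual node convergence: a node in hierarchy level `N_i` has
`ĥ_v^{(n)} = c(v)` for every `n ≥ i`. -/
theorem node_convergence (E : Finset (Finset α)) (i : ℕ) (v : α) (hv : v ∈ level E i) :
    ∀ n ≥ i, hhatSeq E n v = coreNum E v := by
  intro n hn
  refine le_antisymm ?_ (coreNum_le_hhat E n v)
  exact (hhat_antitone E hn v).trans (hhat_le_coreNum_of_level E i v hv)
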